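/- Let ε > 0 and let ℱ be the family of all functions f holomorphic (analytic) on the open unit disk 𝔻 such that f^#(z) ≥ ε for all z ∈ 𝔻. Then ℱ is a normal family in 𝔻. -/

import Mathlib

open Complex Metric Set Filter Topology
open scoped Classical

/-- The spherical derivative of a meromorphic function: `|f'|/(1+|f|²)` at
points where `f` is analytic (finite), and `(1/f)^#` at poles. -/
noncomputable def sphDeriv (f : ℂ → ℂ) (z : ℂ) : ℝ :=
  if AnalyticAt ℂ f z then ‖deriv f z‖ / (1 + ‖f z‖ ^ 2)
  else ‖deriv (fun w => (f w)⁻¹) z‖ / (1 + ‖(f z)⁻¹‖ ^ 2)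

/-- `f` is meromorphic on `D`, normalized so that at every non-analytic point
(i.e. pole) the value of `f` is `0` and the reciprocal `1/f` is analytic
(it is the analytic extension, vanishing at the pole). -/
def MeromorphicNiceOn (f : ℂ → ℂ) (D : Set ℂ) : Prop :=
  MeromorphicOn f D ∧
    ∀ z ∈ D, ¬ AnalyticAt ℂ f z → f z = 0 ∧ AnalyticAt ℂ (fun w => (f w)⁻¹) z

/-- The chordal (spherical) distance on the Riemann sphere `ℂ ∪ {∞}`. -/
noncomputable def chordalDist : OnePoint ℂ → OnePoint ℂ → ℝ
  | Option.some z, Option.some w =>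
      ‖z - w‖ / (Real.sqrt (1 + ‖z‖ ^ 2) * Real.sqrt (1 + ‖w‖ ^ 2))
  | Option.some z, Option.none => 1 / Real.sqrt (1 + ‖z‖ ^ 2)
  | Option.none, Option.some w => 1 / Real.sqrt (1 + ‖w‖ ^ 2)
  | Option.none, Option.none => 0

/-- A meromorphic function viewed as a map into the Riemann sphere: at
non-analytic points (poles) the value is `∞`. -/
noncomputable def spherify (f : ℂ → ℂ) (z : ℂ) : OnePoint ℂ :=
  if AnalyticAt ℂ f z then (f z : OnePoint ℂ) else OnePoint.infty

/-- Locally uniform convergence on `D` with respect to the chordal metric. -/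
def SphTendstoLocallyUniformlyOn (F : ℕ → ℂ → OnePoint ℂ) (g : ℂ → OnePoint ℂ)
    (D : Set ℂ) : Prop :=
  ∀ ε : ℝ, 0 < ε → ∀ z ∈ D, ∃ t ∈ 𝓝[D] z,
    ∀ᶠ n in atTop, ∀ w ∈ t, chordalDist (F n w) (g w) < ε

/-- A family of meromorphic functions is normal on `D` if every sequence has a
subsequence converging locally uniformly on `D` with respect to the spherical
metric (the limit may take the value `∞`, e.g. be the constant `∞`). -/
def SphNormalOn (𝓕 : Set (ℂ → ℂ)) (D : Set ℂ) : Prop :=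
  ∀ F : ℕ → ℂ → ℂ, (∀ n, F n ∈ 𝓕) →
    ∃ φ : ℕ → ℕ, StrictMono φ ∧ ∃ g : ℂ → OnePoint ℂ,
      SphTendstoLocallyUniformlyOn (fun n => spherify (F (φ n))) g D


/-!
If `f` is holomorphic with `f^# ≥ ε`, then from any point `w` one can move a small distance `δ`
(in the direction in which `f` moves radially outwards) so that `arctan ‖f‖` grows by almost
`ε δ`. As `arctan ‖f‖ < π / 2`, this growth cannot persist up to the boundary of a ball
`closedBall z R` in the disk unless `arctan ‖f z‖ < π / 2 - ε R / 2`; so the family is locally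
uniformly bounded. Montel's theorem (Schwarz's lemma for a uniform Lipschitz bound, Arzelà–Ascoli
on each ball `closedBall 0 r` and a diagonal subsequence) then gives locally uniform convergence,
which implies chordal convergence since the chordal distance is at most the euclidean one.
-/

open scoped BoundedContinuousFunction NNReal

lemma eventually_exists_arctan_norm_lt {f : ℂ → ℂ} {z d : ℂ} {c : ℝ} (hf : HasDerivAt f d z)
    (hc : c * (1 + ‖f z‖ ^ 2) < ‖d‖) :
    ∀ᶠ δ in 𝓝[>] (0 : ℝ), ∃ w ∈ closedBall z δ,
      Real.arctan ‖f z‖ + c * δ < Real.arctan ‖f w‖ := by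
  -- `u` rotates `f z` onto the positive real axis and `v` is chosen so that `d v u = ‖d‖`:
  -- along `t ↦ z + t v` the lower bound `re (u f)` of `‖f‖` grows at rate `‖d‖`.
  set u : ℂ := exp (↑(-arg (f z)) * I)
  set v : ℂ := exp (↑(arg (f z) - arg d) * I)
  have hu : f z * u = ‖f z‖ := by
    conv_lhs => rw [← norm_mul_exp_arg_mul_I (f z)]
    rw [mul_assoc, ← Complex.exp_add]
    push_cast; ring_nf; simp
  have hdvu : d * v * u = ‖d‖ := by
    conv_lhs => rw [← norm_mul_exp_arg_mul_I d]
    rw [mul_assoc, mul_assoc, ← Complex.exp_add, ← Complex.exp_add]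
    push_cast; ring_nf; simp
  set ψ : ℝ → ℝ := fun t => (f (z + t * v) * u).re
  have hψ0 : ψ 0 = ‖f z‖ := by simp only [ψ, ofReal_zero, zero_mul, add_zero, hu, ofReal_re]
  have hψ : HasDerivAt (fun t => Real.arctan (ψ t)) (1 / (1 + ‖f z‖ ^ 2) * ‖d‖) 0 := by
    have hline : HasDerivAt (fun w : ℂ => z + w * v) v ((0 : ℝ) : ℂ) := by
      simpa using ((hasDerivAt_id (0 : ℂ)).mul_const v).const_add z
    have := ((hf.comp_of_eq _ hline (by simp)).mul_const u).real_of_complex.arctan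
    rw [hdvu, ofReal_re] at this
    rwa [← hψ0]
  have hslope : c < 1 / (1 + ‖f z‖ ^ 2) * ‖d‖ := by
    rw [one_div, inv_mul_eq_div, lt_div_iff₀ (by positivity)]; exact hc
  filter_upwards [hψ.tendsto_slope_zero_right.eventually (lt_mem_nhds hslope),
    self_mem_nhdsWithin] with δ hδ (hδ0 : 0 < δ)
  refine ⟨z + δ * v, ?_, ?_⟩
  · rw [mem_closedBall, dist_self_add_left, norm_mul, norm_exp_ofReal_mul_I, mul_one,
      norm_real, Real.norm_of_nonneg hδ0.le]
  · have hψ_le : ψ δ ≤ ‖f (z + δ * v)‖ := by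
      simpa only [norm_mul, norm_exp_ofReal_mul_I, mul_one, u] using
        re_le_norm (f (z + δ * v) * u)
    rw [zero_add, smul_eq_mul, lt_inv_mul_iff₀ hδ0, hψ0] at hδ
    linarith [Real.arctan_strictMono.monotone hψ_le]

-- For `c ≥ 0`, `arctan ‖f w‖ - c ‖w - z‖` attains its maximum over the ball on the boundary,
-- since `eventually_exists_arctan_norm_lt` increases it from any interior point.
lemma arctan_norm_add_mul_lt_pi_div_two {f : ℂ → ℂ} {z : ℂ} {R c : ℝ} (hR : 0 ≤ R)
    (hf : ∀ w ∈ closedBall z R, DifferentiableAt ℂ f w)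
    (hc : ∀ w ∈ closedBall z R, c * (1 + ‖f w‖ ^ 2) < ‖deriv f w‖) :
    Real.arctan ‖f z‖ + c * R < Real.pi / 2 := by
  rcases lt_or_ge c 0 with hc0 | hc0
  · linarith [Real.arctan_lt_pi_div_two ‖f z‖, mul_nonpos_of_nonpos_of_nonneg hc0.le hR]
  set φ : ℂ → ℝ := fun w => Real.arctan ‖f w‖ - c * dist w z
  have hφ : ContinuousOn φ (closedBall z R) := continuousOn_of_forall_continuousAt fun w hw =>
    (Real.continuous_arctan.continuousAt.comp (hf w hw).continuousAt.norm).sub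
      (continuous_const.mul (continuous_id.dist continuous_const)).continuousAt
  obtain ⟨w₀, hw₀, hmax⟩ :=
    (isCompact_closedBall z R).exists_isMaxOn ⟨z, mem_closedBall_self hR⟩ hφ
  have hw₀R : dist w₀ z = R := by
    by_contra hne
    have hlt : dist w₀ z < R := lt_of_le_of_ne hw₀ hne
    obtain ⟨δ, ⟨w₁, hw₁, hgrow⟩, hδ0, hδ⟩ :=
      ((eventually_exists_arctan_norm_lt (hf w₀ hw₀).hasDerivAt (hc w₀ hw₀)).and
        (Ioo_mem_nhdsGT (sub_pos.2 hlt))).exists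
    have hdist : dist w₁ z ≤ dist w₀ z + δ :=
      (dist_triangle _ w₀ _).trans (by linarith [mem_closedBall.1 hw₁])
    have := isMaxOn_iff.1 hmax w₁ (show dist w₁ z ≤ R by linarith)
    simp only [φ] at this
    linarith [mul_le_mul_of_nonneg_left hdist hc0]
  have := isMaxOn_iff.1 hmax z (mem_closedBall_self hR)
  simp only [φ, dist_self, mul_zero, sub_zero, hw₀R] at this
  linarith [Real.arctan_lt_pi_div_two ‖f w₀‖]

lemma sphDeriv_of_analyticAt {f : ℂ → ℂ} {z : ℂ} (hf : AnalyticAt ℂ f z) :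
    sphDeriv f z = ‖deriv f z‖ / (1 + ‖f z‖ ^ 2) :=
  if_pos hf

lemma norm_lt_tan_of_le_sphDeriv {f : ℂ → ℂ} {z : ℂ} {ε R : ℝ} (hε : 0 < ε) (hR : 0 < R)
    (hf : ∀ w ∈ closedBall z R, AnalyticAt ℂ f w)
    (hsd : ∀ w ∈ closedBall z R, ε ≤ sphDeriv f w) :
    ‖f z‖ < Real.tan (Real.pi / 2 - ε / 2 * R) := by
  have hc : ∀ w ∈ closedBall z R, ε / 2 * (1 + ‖f w‖ ^ 2) < ‖deriv f w‖ := fun w hw => by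
    have := hsd w hw
    rw [sphDeriv_of_analyticAt (hf w hw), le_div_iff₀ (by positivity)] at this
    nlinarith [sq_nonneg ‖f w‖]
  have harctan := arctan_norm_add_mul_lt_pi_div_two hR.le
    (fun w hw => (hf w hw).differentiableAt) hc
  rw [← Real.arctan_lt_arctan_iff, Real.arctan_tan] <;>
    linarith [Real.neg_pi_div_two_lt_arctan ‖f z‖, mul_pos (half_pos hε) hR]

section Schwarz

variable {E F : Type*} [NormedAddCommGroup E] [NormedSpace ℂ E] [NormedAddCommGroup F]
  [NormedSpace ℂ F]

lemma dist_le_two_mul_div_mul_dist_of_norm_le {f : E → F} {c z : E} {ρ M : ℝ}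
    (hf : DifferentiableOn ℂ f (ball c ρ)) (hM : ∀ w ∈ ball c ρ, ‖f w‖ ≤ M)
    (hz : z ∈ ball c ρ) : dist (f z) (f c) ≤ 2 * M / ρ * dist z c := by
  have hc : c ∈ ball c ρ := mem_ball_self (pos_of_mem_ball hz)
  refine Complex.dist_le_div_mul_dist_of_mapsTo_ball hf (fun w hw => ?_) hz
  rw [mem_closedBall, dist_eq_norm]
  linarith [norm_sub_le (f w) (f c), hM w hw, hM c hc]

lemma lipschitzOnWith_closedBall_of_norm_le {f : E → F} {c : E} {r R M : ℝ} (hrR : r < R)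
    (hf : DifferentiableOn ℂ f (ball c R)) (hM : ∀ w ∈ ball c R, ‖f w‖ ≤ M) :
    LipschitzOnWith (2 * M / (R - r)).toNNReal f (closedBall c r) := by
  refine LipschitzOnWith.of_dist_le' fun x hx y hy => ?_
  have hsub : ball y (R - r) ⊆ ball c R := ball_subset_ball' (by linarith [mem_closedBall.1 hy])
  rcases lt_or_ge (dist x y) (R - r) with hxy | hxy
  · exact dist_le_two_mul_div_mul_dist_of_norm_le (hf.mono hsub) (fun w hw => hM w (hsub hw)) hxy
  · have hyR : y ∈ ball c R := hsub (mem_ball_self (by linarith))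
    have hxR : x ∈ ball c R := lt_of_le_of_lt (mem_closedBall.1 hx) hrR
    calc dist (f x) (f y) ≤ 2 * M := by
          rw [dist_eq_norm]; linarith [norm_sub_le (f x) (f y), hM x hxR, hM y hyR]
      _ = 2 * M / (R - r) * (R - r) := by field_simp [(sub_pos.2 hrR).ne']
      _ ≤ 2 * M / (R - r) * dist x y := by
          have hM0 : 0 ≤ M := (norm_nonneg _).trans (hM y hyR)
          gcongr

end Schwarz

lemma isCompact_closure_setOf_norm_le_lipschitzWith {α β : Type*} [PseudoMetricSpace α]
    [CompactSpace α] [NormedAddCommGroup β] [ProperSpace β] (M : ℝ) (K : ℝ≥0) :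
    IsCompact (closure {h : α →ᵇ β | (∀ x, ‖h x‖ ≤ M) ∧ LipschitzWith K h}) :=
  BoundedContinuousFunction.arzela_ascoli (closedBall 0 M) (isCompact_closedBall 0 M) _
    (fun _ x hh => mem_closedBall_zero_iff.2 (hh.1 x))
    (LipschitzWith.uniformEquicontinuous _ K fun h => h.2.2).equicontinuous

lemma tendstoLocallyUniformlyOn_limUnder_of_forall_exists_nhds {ι α β : Type*}
    [TopologicalSpace α] [UniformSpace β] [CompleteSpace β] [Nonempty β] [Nonempty ι]
    [SemilatticeSup ι]
    {F : ι → α → β} {s : Set α} (h : ∀ x ∈ s, ∃ t ∈ 𝓝[s] x, UniformCauchySeqOn F atTop t) :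
    TendstoLocallyUniformlyOn F (fun x => limUnder atTop fun n => F n x) atTop s :=
  tendstoLocallyUniformlyOn_of_forall_exists_nhds fun x hx => by
    obtain ⟨t, ht, hC⟩ := h x hx
    exact ⟨t, ht, hC.tendstoUniformlyOn_of_tendsto fun y hy => (hC.cauchySeq hy).tendsto_limUnder⟩

lemma exists_subseq_uniformCauchySeqOn_closedBall {F : ℕ → ℂ → ℂ} {r : ℕ → ℝ}
    (hr : ∀ k, r k < 1) (hF : ∀ n, DifferentiableOn ℂ (F n) (ball 0 1))
    (hbd : ∀ r < 1, ∃ M, ∀ n, ∀ z ∈ closedBall (0 : ℂ) r, ‖F n z‖ ≤ M) :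
    ∃ φ : ℕ → ℕ, StrictMono φ ∧
      ∀ k, UniformCauchySeqOn (fun n => F (φ n)) atTop (closedBall 0 (r k)) := by
  choose M hM using fun k => hbd ((1 + r k) / 2) (by linarith [hr k])
  have hlip : ∀ n k, LipschitzOnWith (2 * M k / ((1 + r k) / 2 - r k)).toNNReal (F n)
      (closedBall 0 (r k)) := fun n k =>
    lipschitzOnWith_closedBall_of_norm_le (by linarith [hr k])
      ((hF n).mono (ball_subset_ball (by linarith [hr k])))
      fun w hw => hM k n w (ball_subset_closedBall hw)
  have (k : ℕ) : CompactSpace (closedBall (0 : ℂ) (r k)) :=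
    isCompact_iff_compactSpace.1 (isCompact_closedBall _ _)
  -- Diagonal extraction: the restrictions of `F n` to all the balls `closedBall 0 (r k)` lie in
  -- a countable product of Arzelà–Ascoli compacta.
  let Y : ℕ → ∀ k, closedBall (0 : ℂ) (r k) →ᵇ ℂ := fun n k =>
    .mkOfCompact ⟨(closedBall 0 (r k)).domRestrict (F n), ((hF n).continuousOn.mono
      (closedBall_subset_ball (hr k))).domRestrict⟩
  have hY : ∀ n, Y n ∈ univ.pi fun k => closure {h : closedBall (0 : ℂ) (r k) →ᵇ ℂ |
      (∀ x, ‖h x‖ ≤ M k) ∧ LipschitzWith (2 * M k / ((1 + r k) / 2 - r k)).toNNReal h} :=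
    fun n => mem_univ_pi.2 fun k => subset_closure
      ⟨fun x => hM k n x (closedBall_subset_closedBall (by linarith [hr k]) x.2),
        (hlip n k).to_restrict⟩
  obtain ⟨L, -, φ, hφ, hlim⟩ := (isCompact_univ_pi fun k =>
    isCompact_closure_setOf_norm_le_lipschitzWith _ _).tendsto_subseq hY
  refine ⟨φ, hφ, fun k u hu => ?_⟩
  have hC := (tendstoUniformlyOn_univ.2 (BoundedContinuousFunction.tendsto_iff_tendstoUniformly.1
    (tendsto_pi_nhds.1 hlim k))).uniformCauchySeqOn
  exact (hC u hu).mono fun m hm x hx => hm ⟨x, hx⟩ trivial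

theorem exists_subseq_tendstoLocallyUniformlyOn_ball {F : ℕ → ℂ → ℂ}
    (hF : ∀ n, DifferentiableOn ℂ (F n) (ball 0 1))
    (hbd : ∀ r < 1, ∃ M, ∀ n, ∀ z ∈ closedBall (0 : ℂ) r, ‖F n z‖ ≤ M) :
    ∃ φ : ℕ → ℕ, StrictMono φ ∧ ∃ g : ℂ → ℂ,
      TendstoLocallyUniformlyOn (fun n => F (φ n)) g atTop (ball 0 1) := by
  obtain ⟨φ, hφ, hC⟩ := exists_subseq_uniformCauchySeqOn_closedBall
    (r := fun k => 1 - 1 / (k + 1)) (fun k => sub_lt_self 1 Nat.one_div_pos_of_nat) hF hbd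
  refine ⟨φ, hφ, _, tendstoLocallyUniformlyOn_limUnder_of_forall_exists_nhds fun z hz => ?_⟩
  obtain ⟨k, hk⟩ := exists_nat_one_div_lt (sub_pos.2 (mem_ball_zero_iff.1 hz))
  refine ⟨_, mem_nhdsWithin_of_mem_nhds (closedBall_mem_nhds_of_mem ?_), hC k⟩
  rw [mem_ball_zero_iff]; linarith

lemma chordalDist_coe_le_norm_sub (z w : ℂ) : chordalDist z w ≤ ‖z - w‖ :=
  div_le_self (norm_nonneg _) (one_le_mul_of_one_le_of_one_le
    (Real.one_le_sqrt.2 (by nlinarith [norm_nonneg z]))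
    (Real.one_le_sqrt.2 (by nlinarith [norm_nonneg w])))

lemma spherify_of_analyticAt {f : ℂ → ℂ} {z : ℂ} (hf : AnalyticAt ℂ f z) :
    spherify f z = f z :=
  if_pos hf

lemma TendstoLocallyUniformlyOn.sphTendstoLocallyUniformlyOn {F : ℕ → ℂ → ℂ} {g : ℂ → ℂ}
    {D : Set ℂ} (hD : IsOpen D) (hF : ∀ n, DifferentiableOn ℂ (F n) D)
    (h : TendstoLocallyUniformlyOn F g atTop D) :
    SphTendstoLocallyUniformlyOn (fun n => spherify (F n)) (fun w => g w) D := by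
  intro ε hε z hz
  obtain ⟨t, ht, hFt⟩ := Metric.tendstoLocallyUniformlyOn_iff.1 h ε hε z hz
  refine ⟨t ∩ D, inter_mem ht self_mem_nhdsWithin, hFt.mono fun n hn w hw => ?_⟩
  change chordalDist (spherify (F n) w) (g w) < ε
  rw [spherify_of_analyticAt ((hF n).analyticAt (hD.mem_nhds hw.2))]
  calc chordalDist (F n w) (g w) ≤ dist (g w) (F n w) := by
        rw [dist_comm, dist_eq_norm]; exact chordalDist_coe_le_norm_sub _ _
    _ < ε := hn w hw.1

/-- The family of all functions holomorphic on the unit disk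
whose spherical derivative is at least `ε` everywhere is normal. -/
theorem normal_of_sphDeriv_ge_analytic (ε : ℝ) (hε : 0 < ε) :
    SphNormalOn {f : ℂ → ℂ | DifferentiableOn ℂ f (ball (0 : ℂ) 1) ∧
      ∀ z ∈ ball (0 : ℂ) 1, ε ≤ sphDeriv f z} (ball (0 : ℂ) 1) := by
  intro F hF
  have hbd : ∀ r < 1, ∃ M, ∀ n, ∀ z ∈ closedBall (0 : ℂ) r, ‖F n z‖ ≤ M := fun r hr =>
    ⟨_, fun n z hz => by
      have hsub : closedBall z ((1 - r) / 2) ⊆ ball 0 1 :=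
        closedBall_subset_ball' (by linarith [mem_closedBall.1 hz])
      exact (norm_lt_tan_of_le_sphDeriv hε (by linarith)
        (fun w hw => (hF n).1.analyticAt (isOpen_ball.mem_nhds (hsub hw)))
        (fun w hw => (hF n).2 w (hsub hw))).le⟩
  obtain ⟨φ, hφ, g, hg⟩ := exists_subseq_tendstoLocallyUniformlyOn_ball (fun n => (hF n).1) hbd
  exact ⟨φ, hφ, _, hg.sphTendstoLocallyUniformlyOn isOpen_ball fun n => (hF (φ n)).1⟩
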